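/- arXiv:1802.10519 — 3 statements merged into one kernel-verified Lean document; each statement's English description precedes it below -/
import Mathlib

section
/- Let $i_1,\dots,i_r\in\{1,\dots,n\}$ ($r\geq 3$) be pairwise distinct indices and let $f_k:\mathbb{R}\times\mathbb{R}\to\mathbb{R}$, $k=1,\dots,r-1$, be smooth functions. Define vector fields on $\mathbb{R}^n$ by $h_{k+1,k}(x)=e_{i_k} f_k(x_{i_k},x_{i_{k+1}})$ for $k=1,\dots,r-1$. Then the iterated Lie bracket satisfies, for all $x\in\mathbb{R}^n$, $\big[h_{r,r-1},\big[h_{r-1,r-2},\big[\dots,[h_{3,2},h_{2,1}]\dots\big]\big]\big](x) = e_{i_1}\, f_{r-1}(x_{i_{r-1}},x_{i_r})\,\prod_{k=1}^{r-2}\frac{\partial f_k}{\partial x_{i_{k+1}}}(x_{i_k},x_{i_{k+1}})$. -/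
/-- Lie bracket of vector fields on ℝⁿ: [f,g](x) = Dg(x)f(x) - Df(x)g(x). -/
noncomputable def lieBracket {n : ℕ} (f g : (Fin n → ℝ) → (Fin n → ℝ)) :
    (Fin n → ℝ) → (Fin n → ℝ) :=
  fun x => fderiv ℝ g x (f x) - fderiv ℝ f x (g x)

/-- The i-th standard basis vector of ℝⁿ. -/
def stdBasis {n : ℕ} (i : Fin n) : Fin n → ℝ := fun k => if k = i then 1 else 0

/-- Iterated Lie bracket nested from the inside out:
`iterBracketIn h 0 = h 1`, `iterBracketIn h (m+1) = [h (m+2), iterBracketIn h m]`,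
so that `iterBracketIn h (r-2) = [h (r-1), [⋯, [h 3, [h 2, h 1]]⋯]]`
(where `h k` stands for the vector field `h_{k+1,k}`). -/
noncomputable def iterBracketIn {n : ℕ} (h : ℕ → (Fin n → ℝ) → (Fin n → ℝ)) :
    ℕ → (Fin n → ℝ) → (Fin n → ℝ)
  | 0 => h 1
  | m + 1 => lieBracket (h (m + 2)) (iterBracketIn h m)


/-- The partial derivative in the second variable. -/
noncomputable def D2 (F : ℝ → ℝ → ℝ) : ℝ × ℝ → ℝ :=
  fun p => fderiv ℝ (fun q : ℝ × ℝ => F q.1 q.2) p (0, 1)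

lemma contDiff_D2 (F : ℝ → ℝ → ℝ) (hF : ContDiff ℝ (⊤ : ℕ∞) (fun p : ℝ × ℝ => F p.1 p.2)) :
    ContDiff ℝ (⊤ : ℕ∞) (D2 F) :=
  (hF.fderiv_right (by simp)).clm_apply contDiff_const

lemma D2_eq_deriv (F : ℝ → ℝ → ℝ) (hF : ContDiff ℝ (⊤ : ℕ∞) (fun p : ℝ × ℝ => F p.1 p.2))
    (a b : ℝ) : D2 F (a, b) = deriv (fun s => F a s) b := by
  have h1 : HasDerivAt (fun s : ℝ => ((a, s) : ℝ × ℝ)) (0, 1) b :=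
    (hasDerivAt_const b a).prodMk (hasDerivAt_id b)
  have h2 := (hF.differentiable (by simp) (a, b)).hasFDerivAt
  have h3 : HasDerivAt (fun s => F a s)
      (fderiv ℝ (fun q : ℝ × ℝ => F q.1 q.2) (a, b) (0, 1)) b :=
    h2.comp_hasDerivAt b h1
  exact h3.deriv.symm

/-- projection onto two coordinates, as a continuous linear map -/
noncomputable def pr2 {n : ℕ} (a b : Fin n) : (Fin n → ℝ) →L[ℝ] ℝ × ℝ :=
  (ContinuousLinearMap.proj a).prod (ContinuousLinearMap.proj b)

lemma hasFDerivAt_coord {n : ℕ} (F : ℝ × ℝ → ℝ) (hF : Differentiable ℝ F) (a b : Fin n)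
    (x : Fin n → ℝ) :
    HasFDerivAt (fun y : Fin n → ℝ => F (y a, y b))
      ((fderiv ℝ F (x a, x b)).comp (pr2 a b)) x :=
  ((hF (x a, x b)).hasFDerivAt).comp x (pr2 a b).hasFDerivAt

lemma diff_coord {n : ℕ} (F : ℝ × ℝ → ℝ) (hF : Differentiable ℝ F) (a b : Fin n) :
    Differentiable ℝ (fun y : Fin n → ℝ => F (y a, y b)) :=
  fun x => (hasFDerivAt_coord F hF a b x).differentiableAt

lemma fderiv_coord_apply {n : ℕ} (F : ℝ × ℝ → ℝ) (hF : Differentiable ℝ F) (a b : Fin n)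
    (x v : Fin n → ℝ) :
    fderiv ℝ (fun y : Fin n → ℝ => F (y a, y b)) x v = fderiv ℝ F (x a, x b) (v a, v b) := by
  rw [(hasFDerivAt_coord F hF a b x).fderiv]; rfl

lemma diff_coord' {n : ℕ} (F : ℝ → ℝ → ℝ) (hF : Differentiable ℝ (fun p : ℝ × ℝ => F p.1 p.2))
    (a b : Fin n) : Differentiable ℝ (fun y : Fin n → ℝ => F (y a) (y b)) :=
  diff_coord (fun p : ℝ × ℝ => F p.1 p.2) hF a b

lemma fderiv_coord_apply' {n : ℕ} (F : ℝ → ℝ → ℝ)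
    (hF : Differentiable ℝ (fun p : ℝ × ℝ => F p.1 p.2)) (a b : Fin n) (x v : Fin n → ℝ) :
    fderiv ℝ (fun y : Fin n → ℝ => F (y a) (y b)) x v
      = fderiv ℝ (fun p : ℝ × ℝ => F p.1 p.2) (x a, x b) (v a, v b) :=
  fderiv_coord_apply (fun p : ℝ × ℝ => F p.1 p.2) hF a b x v

/-- the product of partial derivatives -/
noncomputable def Pp {n : ℕ} (i : ℕ → Fin n) (f : ℕ → ℝ → ℝ → ℝ) (m : ℕ)
    (x : Fin n → ℝ) : ℝ :=
  ∏ k ∈ Finset.Icc 1 m, D2 (f k) (x (i k), x (i (k + 1)))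

lemma Pp_succ {n : ℕ} (i : ℕ → Fin n) (f : ℕ → ℝ → ℝ → ℝ) (m : ℕ) (x : Fin n → ℝ) :
    Pp i f (m + 1) x = Pp i f m x * D2 (f (m + 1)) (x (i (m + 1)), x (i (m + 2))) := by
  simp only [Pp]
  rw [Finset.prod_Icc_succ_top (Nat.le_add_left 1 m)]

lemma Pp_diff {n : ℕ} (i : ℕ → Fin n) (f : ℕ → ℝ → ℝ → ℝ)
    (hf : ∀ k, ContDiff ℝ (⊤ : ℕ∞) (fun p : ℝ × ℝ => f k p.1 p.2)) (m : ℕ) :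
    Differentiable ℝ (Pp i f m) := by
  induction m with
  | zero =>
      have h0 : Pp i f 0 = fun _ => (1 : ℝ) := by funext y; simp [Pp]
      rw [h0]; exact differentiable_const 1
  | succ m ih =>
      have hPp : Pp i f (m + 1) = fun y =>
          Pp i f m y * D2 (f (m + 1)) (y (i (m + 1)), y (i (m + 2))) :=
        funext fun y => Pp_succ i f m y
      rw [hPp]
      exact ih.mul (diff_coord _ ((contDiff_D2 _ (hf (m + 1))).differentiable (by simp)) _ _)


lemma Pp_fderiv_zero {n : ℕ} (i : ℕ → Fin n) (f : ℕ → ℝ → ℝ → ℝ)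
    (hf : ∀ k, ContDiff ℝ (⊤ : ℕ∞) (fun p : ℝ × ℝ => f k p.1 p.2)) (m : ℕ)
    (x v : Fin n → ℝ) (hv : ∀ k, 1 ≤ k → k ≤ m + 1 → v (i k) = 0) :
    fderiv ℝ (Pp i f m) x v = 0 := by
  induction m with
  | zero =>
      have h0 : Pp i f 0 = fun _ => (1 : ℝ) := by
        funext y; simp [Pp]
      rw [h0, fderiv_fun_const]
      simp
  | succ m ih =>
      have hd2 : Differentiable ℝ
          (fun y : Fin n → ℝ => D2 (f (m + 1)) (y (i (m + 1)), y (i (m + 2)))) :=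
        diff_coord _ ((contDiff_D2 _ (hf (m + 1))).differentiable (by simp)) _ _
      have hPp : Pp i f (m + 1) = fun y =>
          Pp i f m y * D2 (f (m + 1)) (y (i (m + 1)), y (i (m + 2))) :=
        funext fun y => Pp_succ i f m y
      rw [hPp, fderiv_fun_mul ((Pp_diff i f hf m) x) (hd2 x)]
      have h1 : fderiv ℝ (Pp i f m) x v = 0 :=
        ih (fun k hk1 hk2 => hv k hk1 (by omega))
      have h2 : fderiv ℝ (fun y : Fin n → ℝ => D2 (f (m + 1)) (y (i (m + 1)), y (i (m + 2)))) x v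
          = 0 := by
        rw [fderiv_coord_apply _ ((contDiff_D2 _ (hf (m + 1))).differentiable (by simp)),
          hv (m + 1) (by omega) (by omega), hv (m + 2) (by omega) (by omega)]
        exact (fderiv ℝ (D2 (f (m + 1))) _).map_zero
      simp [h1, h2]

theorem stmt_2 {n r : ℕ} (hr : 3 ≤ r) (i : ℕ → Fin n)
    (hinj : ∀ k l, k ∈ Finset.Icc 1 r → l ∈ Finset.Icc 1 r → i k = i l → k = l)
    (f : ℕ → ℝ → ℝ → ℝ)
    (hf : ∀ k, ContDiff ℝ (⊤ : ℕ∞) (fun p : ℝ × ℝ => f k p.1 p.2))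
    (h : ℕ → (Fin n → ℝ) → (Fin n → ℝ))
    (hh : ∀ k, 1 ≤ k → k ≤ r - 1 →
      ∀ x, h k x = f k (x (i k)) (x (i (k + 1))) • stdBasis (i k)) :
    ∀ x : Fin n → ℝ,
      iterBracketIn h (r - 2) x =
        (f (r - 1) (x (i (r - 1))) (x (i r)) *
          ∏ k ∈ Finset.Icc 1 (r - 2),
            deriv (fun s => f k (x (i k)) s) (x (i (k + 1)))) • stdBasis (i 1) := by
  have hinj' : ∀ k l, 1 ≤ k → k ≤ r → 1 ≤ l → l ≤ r → k ≠ l → i k ≠ i l := by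
    intro k l h1 h2 h3 h4 hne he
    exact hne (hinj k l (Finset.mem_Icc.2 ⟨h1, h2⟩) (Finset.mem_Icc.2 ⟨h3, h4⟩) he)
  have hdf : ∀ k, Differentiable ℝ (fun p : ℝ × ℝ => f k p.1 p.2) :=
    fun k => (hf k).differentiable (by simp)
  have main : ∀ m, m ≤ r - 2 → ∀ x : Fin n → ℝ,
      iterBracketIn h m x =
        (f (m + 1) (x (i (m + 1))) (x (i (m + 2))) * Pp i f m x) • stdBasis (i 1) := by
    intro m
    induction m with
    | zero =>
        intro _ x
        have h1 := hh 1 le_rfl (by omega) x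
        simp only [iterBracketIn, h1, Pp]
        simp
    | succ m ih =>
        intro hm x
        have hm' : m ≤ r - 2 := by omega
        have hGdiff : Differentiable ℝ
            (fun y : Fin n → ℝ => f (m + 1) (y (i (m + 1))) (y (i (m + 2))) * Pp i f m y) :=
          (diff_coord' _ (hdf (m + 1)) _ _).mul (Pp_diff i f hf m)
        have hIH : iterBracketIn h m = fun y =>
            (f (m + 1) (y (i (m + 1))) (y (i (m + 2))) * Pp i f m y) • stdBasis (i 1) :=
          funext (ih hm')
        have hcdiff : Differentiable ℝ
            (fun y : Fin n → ℝ => f (m + 2) (y (i (m + 2))) (y (i (m + 3)))) :=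
          diff_coord' _ (hdf (m + 2)) _ _
        have hH : h (m + 2) = fun y =>
            f (m + 2) (y (i (m + 2))) (y (i (m + 3))) • stdBasis (i (m + 2)) :=
          funext (hh (m + 2) (by omega) (by omega))
        have hne1 : ∀ k, 1 ≤ k → k ≤ m + 1 → i k ≠ i (m + 2) :=
          fun k h1 h2 => hinj' k (m + 2) h1 (by omega) (by omega) (by omega) (by omega)
        have hne2 : i 1 ≠ i (m + 2) := hne1 1 le_rfl (by omega)
        have hne3 : i 1 ≠ i (m + 3) :=
          hinj' 1 (m + 3) le_rfl (by omega) (by omega) (by omega) (by omega)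
        -- abbreviations as plain terms
        set Gx : ℝ := f (m + 1) (x (i (m + 1))) (x (i (m + 2))) * Pp i f m x with hGx
        set cx : ℝ := f (m + 2) (x (i (m + 2))) (x (i (m + 3))) with hcx
        -- the direction vector for term 1
        have hw : ∀ k, 1 ≤ k → k ≤ m + 1 → (cx • stdBasis (i (m + 2))) (i k) = 0 := by
          intro k h1 h2
          simp [stdBasis, hne1 k h1 h2]
        have hwb : (cx • stdBasis (i (m + 2))) (i (m + 2)) = cx := by
          simp [stdBasis]
        have hwa : (cx • stdBasis (i (m + 2))) (i (m + 1)) = 0 := hw (m + 1) (by omega) le_rfl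
        -- Term 1
        have hT1 : fderiv ℝ (fun y : Fin n → ℝ =>
              (f (m + 1) (y (i (m + 1))) (y (i (m + 2))) * Pp i f m y) • stdBasis (i 1)) x
              (cx • stdBasis (i (m + 2)))
            = (cx * D2 (f (m + 1)) (x (i (m + 1)), x (i (m + 2))) * Pp i f m x)
                • stdBasis (i 1) := by
          rw [((hGdiff x).hasFDerivAt.smul_const (stdBasis (i 1))).fderiv,
            ContinuousLinearMap.smulRight_apply]
          congr 1
          rw [fderiv_fun_mul (diff_coord' _ (hdf (m + 1)) (i (m + 1)) (i (m + 2)) x)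
            ((Pp_diff i f hf m) x)]
          have hPz : fderiv ℝ (Pp i f m) x (cx • stdBasis (i (m + 2))) = 0 :=
            Pp_fderiv_zero i f hf m x _ hw
          have hFz : fderiv ℝ (fun y : Fin n → ℝ =>
                f (m + 1) (y (i (m + 1))) (y (i (m + 2)))) x (cx • stdBasis (i (m + 2)))
              = cx * D2 (f (m + 1)) (x (i (m + 1)), x (i (m + 2))) := by
            rw [fderiv_coord_apply' _ (hdf (m + 1)), hwa, hwb]
            have hsc : ((0 : ℝ), cx) = cx • ((0 : ℝ), (1 : ℝ)) := by simp
            rw [hsc, (fderiv ℝ (fun p : ℝ × ℝ => f (m + 1) p.1 p.2) _).map_smul]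
            simp [D2, mul_comm]
          simp only [ContinuousLinearMap.add_apply, ContinuousLinearMap.coe_smul',
            Pi.smul_apply, smul_eq_mul]
          rw [hPz, hFz]
          ring
        -- Term 2
        have hT2 : fderiv ℝ (fun y : Fin n → ℝ =>
              f (m + 2) (y (i (m + 2))) (y (i (m + 3))) • stdBasis (i (m + 2))) x
              (Gx • stdBasis (i 1)) = 0 := by
          rw [((hcdiff x).hasFDerivAt.smul_const (stdBasis (i (m + 2)))).fderiv,
            ContinuousLinearMap.smulRight_apply]
          have hz : fderiv ℝ (fun y : Fin n → ℝ =>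
              f (m + 2) (y (i (m + 2))) (y (i (m + 3)))) x (Gx • stdBasis (i 1)) = 0 := by
            rw [fderiv_coord_apply' _ (hdf (m + 2))]
            have e1 : (Gx • stdBasis (i 1)) (i (m + 2)) = 0 := by
              simp [stdBasis, Ne.symm hne2]
            have e2 : (Gx • stdBasis (i 1)) (i (m + 3)) = 0 := by
              simp [stdBasis, Ne.symm hne3]
            rw [e1, e2]
            exact (fderiv ℝ (fun p : ℝ × ℝ => f (m + 2) p.1 p.2) _).map_zero
          rw [hz, zero_smul]
        show lieBracket (h (m + 2)) (iterBracketIn h m) x = _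
        simp only [lieBracket, hIH, hH]
        rw [hT1, hT2, sub_zero, Pp_succ]
        congr 1
        ring
  intro x
  obtain ⟨s, rfl⟩ : ∃ s, r = s + 3 := ⟨r - 3, by omega⟩
  rw [show s + 3 - 2 = s + 1 from rfl, show s + 3 - 1 = s + 2 from rfl]
  have hP : Pp i f (s + 1) x
      = ∏ k ∈ Finset.Icc 1 (s + 1), deriv (fun t => f k (x (i k)) t) (x (i (k + 1))) :=
    Finset.prod_congr rfl fun k _ => D2_eq_deriv (f k) (hf k) _ _
  have hmain := main (s + 1) (by omega) x
  rw [show s + 1 + 1 = s + 2 from rfl, show s + 1 + 2 = s + 3 from rfl, hP] at hmain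
  exact hmain
end

section
/- Let $i_1,\dots,i_r\in\{1,\dots,n\}$ ($r\geq 3$) be pairwise distinct, and for $k=1,\dots,r-1$ let $f_k(x_{i_k},x_{i_{k+1}})=f_k^{(1)}(x_{i_k})\,f_k^{(2)}(x_{i_{k+1}})$ with $f_k^{(1)},f_k^{(2)}:\mathbb{R}\to\mathbb{R}$ smooth, satisfying $f_k^{(1)}(s)\cdot (f_{k-1}^{(2)})'(s)=1$ for all $s\in\mathbb{R}$ and all $k=2,\dots,r-1$. Define $h_{k+1,k}(x)=e_{i_k} f_k^{(1)}(x_{i_k}) f_k^{(2)}(x_{i_{k+1}})$. Then for all $x\in\mathbb{R}^n$, $\big[h_{r,r-1},\big[h_{r-1,r-2},\big[\dots,[h_{3,2},h_{2,1}]\dots\big]\big]\big](x)=e_{i_1}\, f_1^{(1)}(x_{i_1})\, f_{r-1}^{(2)}(x_{i_r})$. -/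
lemma key_fderiv {n : ℕ} (a b : ℝ → ℝ) (ha : ContDiff ℝ (⊤ : ℕ∞) a) (hb : ContDiff ℝ (⊤ : ℕ∞) b)
    (p q : Fin n) (e : Fin n → ℝ) (x v : Fin n → ℝ) :
    fderiv ℝ (fun y => (a (y p) * b (y q)) • e) x v
      = (deriv a (x p) * v p * b (x q) + a (x p) * deriv b (x q) * v q) • e := by
  set P : (Fin n → ℝ) →L[ℝ] ℝ := ContinuousLinearMap.proj p with hP
  set Q : (Fin n → ℝ) →L[ℝ] ℝ := ContinuousLinearMap.proj q with hQ
  have hp : HasFDerivAt (fun y : Fin n → ℝ => y p) P x := P.hasFDerivAt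
  have hq : HasFDerivAt (fun y : Fin n → ℝ => y q) Q x := Q.hasFDerivAt
  have hA : HasFDerivAt (fun y : Fin n → ℝ => a (y p))
      (((1 : ℝ →L[ℝ] ℝ).smulRight (deriv a (x p))).comp P) x :=
    (((ha.differentiable (by simp)) (x p)).hasDerivAt.hasFDerivAt).comp x hp
  have hB : HasFDerivAt (fun y : Fin n → ℝ => b (y q))
      (((1 : ℝ →L[ℝ] ℝ).smulRight (deriv b (x q))).comp Q) x :=
    (((hb.differentiable (by simp)) (x q)).hasDerivAt.hasFDerivAt).comp x hq
  have hAB : HasFDerivAt (fun y : Fin n → ℝ => (a (y p) * b (y q)) • e) _ x := (hA.mul hB).smul_const e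
  rw [hAB.fderiv]
  simp [hP, hQ, ContinuousLinearMap.smulRight_apply]
  ext j
  simp
  exact Or.inl (by ring)

theorem stmt_3 {n r : ℕ} (hr : 3 ≤ r) (i : ℕ → Fin n)
    (hinj : ∀ k l, k ∈ Finset.Icc 1 r → l ∈ Finset.Icc 1 r → i k = i l → k = l)
    (f1 f2 : ℕ → ℝ → ℝ)
    (hf1 : ∀ k, ContDiff ℝ (⊤ : ℕ∞) (f1 k)) (hf2 : ∀ k, ContDiff ℝ (⊤ : ℕ∞) (f2 k))
    (hcancel : ∀ k, 2 ≤ k → k ≤ r - 1 → ∀ s : ℝ, f1 k s * deriv (f2 (k - 1)) s = 1)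
    (h : ℕ → (Fin n → ℝ) → (Fin n → ℝ))
    (hh : ∀ k, 1 ≤ k → k ≤ r - 1 →
      ∀ x, h k x = (f1 k (x (i k)) * f2 k (x (i (k + 1)))) • stdBasis (i k)) :
    ∀ x : Fin n → ℝ,
      iterBracketIn h (r - 2) x =
        (f1 1 (x (i 1)) * f2 (r - 1) (x (i r))) • stdBasis (i 1) := by
  suffices H : ∀ m, m ≤ r - 2 → ∀ x, iterBracketIn h m x
      = (f1 1 (x (i 1)) * f2 (m + 1) (x (i (m + 2)))) • stdBasis (i 1) by
    intro x
    have e1 : r - 2 + 1 = r - 1 := by omega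
    have e2 : r - 2 + 2 = r := by omega
    have := H (r - 2) le_rfl x
    rw [e1, e2] at this
    exact this
  intro m
  induction m with
  | zero =>
    intro _ x
    simpa [iterBracketIn] using hh 1 le_rfl (by omega) x
  | succ m ih =>
    intro hm x
    have ihx := ih (by omega)
    have hgeq : iterBracketIn h m
        = fun y => (f1 1 (y (i 1)) * f2 (m + 1) (y (i (m + 2)))) • stdBasis (i 1) :=
      funext ihx
    have hheq : h (m + 2)
        = fun y => (f1 (m + 2) (y (i (m + 2))) * f2 (m + 2) (y (i (m + 3)))) • stdBasis (i (m + 2)) :=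
      funext (hh (m + 2) (by omega) (by omega))
    have d1 : i 1 ≠ i (m + 2) := fun e => by
      have := hinj 1 (m + 2) (by simp; omega) (by simp; omega) e; omega
    have d2 : i 1 ≠ i (m + 3) := fun e => by
      have := hinj 1 (m + 3) (by simp; omega) (by simp; omega) e; omega
    show lieBracket (h (m + 2)) (iterBracketIn h m) x = _
    rw [lieBracket, hgeq, hheq]
    rw [key_fderiv (f1 1) (f2 (m + 1)) (hf1 1) (hf2 (m + 1)) (i 1) (i (m + 2))
      (stdBasis (i 1)) x _]
    rw [key_fderiv (f1 (m + 2)) (f2 (m + 2)) (hf1 (m + 2)) (hf2 (m + 2)) (i (m + 2)) (i (m + 3))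
      (stdBasis (i (m + 2))) x _]
    have hc := hcancel (m + 2) (by omega) (by omega) (x (i (m + 2)))
    have hm1 : m + 2 - 1 = m + 1 := by omega
    rw [hm1] at hc
    have hv1 : ((f1 (m + 2) (x (i (m + 2))) * f2 (m + 2) (x (i (m + 3)))) • stdBasis (i (m + 2))) (i 1)
        = 0 := by simp [stdBasis, d1]
    have hv2 : ((f1 (m + 2) (x (i (m + 2))) * f2 (m + 2) (x (i (m + 3)))) • stdBasis (i (m + 2))) (i (m + 2))
        = f1 (m + 2) (x (i (m + 2))) * f2 (m + 2) (x (i (m + 3))) := by simp [stdBasis]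
    have hw1 : ((f1 1 (x (i 1)) * f2 (m + 1) (x (i (m + 2)))) • stdBasis (i 1)) (i (m + 2))
        = 0 := by simp [stdBasis, d1.symm]
    have hw2 : ((f1 1 (x (i 1)) * f2 (m + 1) (x (i (m + 2)))) • stdBasis (i 1)) (i (m + 3))
        = 0 := by simp [stdBasis, d2.symm]
    beta_reduce
    rw [hv1, hv2, hw1, hw2]
    ext j
    simp [stdBasis]
    rcases eq_or_ne j (i 1) with hj | hj <;> simp [hj]
    linear_combination (f1 1 (x (i 1)) * f2 (m + 2) (x (i (m + 3)))) * hc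
end

section
/- Let $m\geq 2$, let $i\in\{1,\dots,n\}$ and indices $j_1,\dots,j_m\in\{1,\dots,n\}$ with $j_k\neq i$ for all $k$. Let $\eta_0,\eta_1,\dots,\eta_m:\mathbb{R}\to\mathbb{R}$ be smooth and let $H_0$ be an antiderivative of $\eta_0$. Define vector fields on $\mathbb{R}^n$: $\psi_1(x)=e_i\,\eta_1(x_{j_1})\,H_0(x_i)$, $\psi_k(x)=e_i\, x_i\,\eta_k(x_{j_k})$ for $k=2,\dots,m-1$, and $\psi_m(x)=e_i\,\eta_m(x_{j_m})$. Then for all $x\in\mathbb{R}^n$, $\big[\big[\dots\big[[\psi_m,\psi_{m-1}],\psi_{m-2}\big],\dots\big],\psi_1\big](x) = e_i\,\eta_0(x_i)\,\prod_{k=1}^{m}\eta_k(x_{j_k})$. -/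
/-- Iterated Lie bracket starting from `ψ m` and successively bracketing with
`ψ (m-1), ψ (m-2), …, ψ 1` on the right:
`[[⋯[[ψ m, ψ (m-1)], ψ (m-2)], ⋯], ψ 1]`. -/
noncomputable def iterBracketOut {n : ℕ} (ψ : ℕ → (Fin n → ℝ) → (Fin n → ℝ)) (m : ℕ) :
    (Fin n → ℝ) → (Fin n → ℝ) :=
  (List.range (m - 1)).foldl (fun acc k => lieBracket acc (ψ (m - 1 - k))) (ψ m)

/-- `c` has a full Fréchet derivative at `x` whose value in direction `v` is `a`. -/
def hasDir {n : ℕ} (c : (Fin n → ℝ) → ℝ) (x v : Fin n → ℝ) (a : ℝ) : Prop :=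
  ∃ C : (Fin n → ℝ) →L[ℝ] ℝ, HasFDerivAt c C x ∧ C v = a

lemma hasDir_comp_proj {n : ℕ} {φ : ℝ → ℝ} {a : ℝ} {l : Fin n} {x v : Fin n → ℝ}
    (hφ : HasDerivAt φ a (x l)) :
    hasDir (fun y => φ (y l)) x v (a * v l) := by
  refine ⟨a • ContinuousLinearMap.proj l, ?_, by simp⟩
  have hp : HasFDerivAt (fun y : Fin n → ℝ => y l)
      (ContinuousLinearMap.proj l : (Fin n → ℝ) →L[ℝ] ℝ) x :=
    (ContinuousLinearMap.proj l : (Fin n → ℝ) →L[ℝ] ℝ).hasFDerivAt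
  exact hφ.comp_hasFDerivAt x hp

lemma hasDir_mul {n : ℕ} {c d : (Fin n → ℝ) → ℝ} {x v : Fin n → ℝ} {a b : ℝ}
    (hc : hasDir c x v a) (hd : hasDir d x v b) :
    hasDir (fun y => c y * d y) x v (c x * b + d x * a) := by
  obtain ⟨C, hC, hCv⟩ := hc
  obtain ⟨D, hD, hDv⟩ := hd
  exact ⟨_, hC.mul hD, by simp [hCv, hDv]⟩

lemma hasDir_prod {n : ℕ} (s : Finset ℕ) (f : ℕ → (Fin n → ℝ) → ℝ) (x v : Fin n → ℝ)
    (h : ∀ k ∈ s, hasDir (f k) x v 0) :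
    hasDir (fun y => ∏ k ∈ s, f k y) x v 0 := by
  classical
  induction s using Finset.induction with
  | empty =>
      refine ⟨0, ?_, rfl⟩
      simpa using hasFDerivAt_const (1 : ℝ) x
  | @insert a s' hk ih =>
      simp only [Finset.prod_insert hk]
      have h1 := h a (Finset.mem_insert_self a s')
      have h2 := ih (fun k hks => h k (Finset.mem_insert_of_mem hks))
      simpa using hasDir_mul h1 h2

lemma lieBracket_smul_eq {n : ℕ} (i : Fin n) (c d : (Fin n → ℝ) → ℝ) (x : Fin n → ℝ)
    (a b : ℝ) (hc : hasDir c x (stdBasis i) a) (hd : hasDir d x (stdBasis i) b) :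
    lieBracket (fun y => c y • stdBasis i) (fun y => d y • stdBasis i) x
      = (c x * b - d x * a) • stdBasis i := by
  obtain ⟨C, hC, hCv⟩ := hc
  obtain ⟨D, hD, hDv⟩ := hd
  have h1 : HasFDerivAt (fun y => c y • stdBasis i) (C.smulRight (stdBasis i)) x := by
    simpa using hC.smul (hasFDerivAt_const (stdBasis i) x)
  have h2 : HasFDerivAt (fun y => d y • stdBasis i) (D.smulRight (stdBasis i)) x := by
    simpa using hD.smul (hasFDerivAt_const (stdBasis i) x)
  simp only [lieBracket, h1.fderiv, h2.fderiv, ContinuousLinearMap.smulRight_apply,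
    map_smul, hCv, hDv, smul_eq_mul]
  rw [smul_smul, smul_smul, ← sub_smul]

theorem stmt_7 {n m : ℕ} (hm : 2 ≤ m) (i : Fin n) (j : ℕ → Fin n)
    (hj : ∀ k, 1 ≤ k → k ≤ m → j k ≠ i)
    (η : ℕ → ℝ → ℝ) (hη : ∀ k, ContDiff ℝ (⊤ : ℕ∞) (η k))
    (H₀ : ℝ → ℝ) (hH₀ : ∀ s : ℝ, HasDerivAt H₀ (η 0 s) s)
    (ψ : ℕ → (Fin n → ℝ) → (Fin n → ℝ))
    (hψ₁ : ∀ x, ψ 1 x = (η 1 (x (j 1)) * H₀ (x i)) • stdBasis i)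
    (hψmid : ∀ k, 2 ≤ k → k ≤ m - 1 →
      ∀ x, ψ k x = (x i * η k (x (j k))) • stdBasis i)
    (hψm : ∀ x, ψ m x = η m (x (j m)) • stdBasis i) :
    ∀ x : Fin n → ℝ,
      iterBracketOut ψ m x =
        (η 0 (x i) * ∏ k ∈ Finset.Icc 1 m, η k (x (j k))) • stdBasis i := by
  -- directional derivative facts
  have hηdir : ∀ k (x : Fin n → ℝ), 1 ≤ k → k ≤ m →
      hasDir (fun y => η k (y (j k))) x (stdBasis i) 0 := by
    intro k x h1 h2
    have hd : HasDerivAt (η k) (deriv (η k) (x (j k))) (x (j k)) :=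
      (((hη k).differentiable (by simp)) (x (j k))).hasDerivAt
    have := hasDir_comp_proj (v := stdBasis i) hd
    simpa [stdBasis, hj k h1 h2] using this
  have hPdir : ∀ ℓ (x : Fin n → ℝ), 1 ≤ ℓ →
      hasDir (fun y => ∏ k ∈ Finset.Icc ℓ m, η k (y (j k))) x (stdBasis i) 0 := by
    intro ℓ x hℓ
    refine hasDir_prod _ _ _ _ (fun k hk => ?_)
    rw [Finset.mem_Icc] at hk
    exact hηdir k x (le_trans hℓ hk.1) hk.2
  have hiddir : ∀ x : Fin n → ℝ, hasDir (fun y => y i) x (stdBasis i) 1 :=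
    fun x => ⟨ContinuousLinearMap.proj i,
      (ContinuousLinearMap.proj i : (Fin n → ℝ) →L[ℝ] ℝ).hasFDerivAt, by simp [stdBasis]⟩
  have hmiddir : ∀ k (x : Fin n → ℝ), 1 ≤ k → k ≤ m →
      hasDir (fun y => y i * η k (y (j k))) x (stdBasis i) (η k (x (j k))) := by
    intro k x h1 h2
    simpa using hasDir_mul (hiddir x) (hηdir k x h1 h2)
  have hψ1dir : ∀ x : Fin n → ℝ,
      hasDir (fun y => η 1 (y (j 1)) * H₀ (y i)) x (stdBasis i)
        (η 1 (x (j 1)) * η 0 (x i)) := by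
    intro x
    have hH : hasDir (fun y => H₀ (y i)) x (stdBasis i) (η 0 (x i)) := by
      simpa [stdBasis] using hasDir_comp_proj (v := stdBasis i) (hH₀ (x i))
    simpa using hasDir_mul (hηdir 1 x le_rfl (by omega)) hH
  -- key invariant
  have key : ∀ t, t ≤ m - 2 →
      ((List.range t).foldl (fun acc k => lieBracket acc (ψ (m - 1 - k))) (ψ m)) =
        fun x => (∏ k ∈ Finset.Icc (m - t) m, η k (x (j k))) • stdBasis i := by
    intro t
    induction t with
    | zero =>
        intro _
        funext x
        simp [hψm x]
    | succ t ih =>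
        intro ht
        have ht' : t ≤ m - 2 := by omega
        rw [List.range_succ, List.foldl_append]
        simp only [List.foldl_cons, List.foldl_nil]
        rw [ih ht']
        funext x
        have hℓ2 : 2 ≤ m - 1 - t := by omega
        have hℓm : m - 1 - t ≤ m - 1 := by omega
        have hψℓ : ψ (m - 1 - t)
            = fun y => (y i * η (m - 1 - t) (y (j (m - 1 - t)))) • stdBasis i :=
          funext (hψmid (m - 1 - t) hℓ2 hℓm)
        rw [hψℓ]
        rw [lieBracket_smul_eq i _ _ x 0 (η (m - 1 - t) (x (j (m - 1 - t))))
          (hPdir (m - t) x (by omega)) (hmiddir (m - 1 - t) x (by omega) (by omega))]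
        congr 1
        have hins : Finset.Icc (m - (t + 1)) m = insert (m - 1 - t) (Finset.Icc (m - t) m) := by
          ext r
          simp only [Finset.mem_Icc, Finset.mem_insert]
          omega
        rw [hins, Finset.prod_insert (by rw [Finset.mem_Icc]; omega)]
        ring
  intro x
  have hm1 : m - 1 = (m - 2) + 1 := by omega
  have hrange : List.range (m - 1) = List.range (m - 2) ++ [m - 2] := by
    rw [hm1, List.range_succ]
  rw [iterBracketOut, hrange, List.foldl_append]
  simp only [List.foldl_cons, List.foldl_nil]
  rw [key (m - 2) le_rfl]
  have h1 : m - 1 - (m - 2) = 1 := by omega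
  rw [h1]
  have hψ1 : ψ 1 = fun y => (η 1 (y (j 1)) * H₀ (y i)) • stdBasis i := funext hψ₁
  rw [hψ1]
  rw [lieBracket_smul_eq i _ _ x 0 (η 1 (x (j 1)) * η 0 (x i))
    (hPdir (m - (m - 2)) x (by omega)) (hψ1dir x)]
  congr 1
  have h2 : m - (m - 2) = 2 := by omega
  rw [h2]
  have hins : Finset.Icc 1 m = insert 1 (Finset.Icc 2 m) := by
    ext r
    simp only [Finset.mem_Icc, Finset.mem_insert]
    omega
  rw [hins, Finset.prod_insert (by rw [Finset.mem_Icc]; omega)]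
  ring
end
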